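/- Let T be a minimal spanning tree on a metric space (M, ρ), and let M = M₁ ⊔ M₂ be a partition into nonempty sets. Then the set of edges of T connecting M₁ and M₂ is infinite if and only if ρ(M₁, M₂) = 0. -/

import Mathlib

open scoped ENNReal

namespace MSTPaper

variable {M : Type*}

/-- The length of an edge `e` of a graph on a metric space: the extended
distance between its endpoints. -/
noncomputable def edgeLen [MetricSpace M] (e : Sym2 M) : ℝ≥0∞ :=
  Sym2.lift ⟨fun x y => edist x y, fun x y => edist_comm x y⟩ e

/-- The length of a graph: the (possibly infinite) sum of the lengths of its edges. -/
noncomputable def graphLen [MetricSpace M] (G : SimpleGraph M) : ℝ≥0∞ :=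
  ∑' e : G.edgeSet, edgeLen (e : Sym2 M)

/-- The distance between two subsets of a metric space. -/
noncomputable def setDist [MetricSpace M] (A B : Set M) : ℝ≥0∞ :=
  ⨅ x ∈ A, ⨅ y ∈ B, edist x y

/-- A minimal spanning tree on the metric space `M`: a spanning tree of finite
length whose length equals the infimum of lengths of all spanning trees on `M`. -/
def IsMST [MetricSpace M] (T : SimpleGraph M) : Prop :=
  T.IsTree ∧ graphLen T < ⊤ ∧ ∀ T' : SimpleGraph M, T'.IsTree → graphLen T ≤ graphLen T'

/-- An edge `uv` of `G` is exact if its length equals the distance between the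
two connected components obtained by removing it. -/
def ExactEdge [MetricSpace M] (G : SimpleGraph M) (u v : M) : Prop :=
  edist u v = setDist {x | (G.deleteEdges {s(u,v)}).Reachable u x}
                      {x | (G.deleteEdges {s(u,v)}).Reachable v x}


/-!
Every crossing edge has length at least `ρ(M₁, M₂)`, so infinitely many of them have infinite
total length unless `ρ(M₁, M₂) = 0`. Conversely, an edge on the tree path from `x` to `y` is never
longer than `ρ(x, y)`, since exchanging it for the edge `xy` would give a shorter spanning tree
(the cycle property). For `x ∈ M₁`, `y ∈ M₂` that path crosses the cut, so `ρ(M₁, M₂)` is at least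
the length of the shortest crossing edge, which is positive when there are only finitely many.
-/

open SimpleGraph

def crossingEdges (G : SimpleGraph M) (A B : Set M) : Set (Sym2 M) :=
  {e | e ∈ G.edgeSet ∧ ∃ x ∈ A, ∃ y ∈ B, e = s(x, y)}

section

variable [MetricSpace M]

@[simp]
lemma edgeLen_mk (x y : M) : edgeLen s(x, y) = edist x y := rfl

lemma edgeLen_pos_of_mem_edgeSet {G : SimpleGraph M} {e : Sym2 M} (he : e ∈ G.edgeSet) :
    0 < edgeLen e := by
  induction e with
  | _ x y => simpa [edist_pos] using G.ne_of_adj he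

lemma setDist_le_edist {A B : Set M} {x y : M} (hx : x ∈ A) (hy : y ∈ B) :
    setDist A B ≤ edist x y :=
  (iInf₂_le x hx).trans (iInf₂_le y hy)

lemma graphLen_sup_le (G H : SimpleGraph M) : graphLen (G ⊔ H) ≤ graphLen G + graphLen H := by
  unfold graphLen
  rw [edgeSet_sup]
  exact ENNReal.tsum_union_le _ _ _

lemma graphLen_edge (x y : M) : graphLen (edge x y) = edist x y := by
  rcases eq_or_ne x y with rfl | hxy
  · simp [graphLen]
  · rw [graphLen, edgeSet_edge_of_ne hxy, tsum_singleton (s(x, y)) edgeLen, edgeLen_mk]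

lemma edgeLen_add_graphLen_deleteEdges {G : SimpleGraph M} {e : Sym2 M} (he : e ∈ G.edgeSet) :
    edgeLen e + graphLen (G.deleteEdges {e}) = graphLen G := by
  unfold graphLen
  rw [edgeSet_deleteEdges, ← tsum_singleton e edgeLen,
    ← Summable.tsum_union_disjoint Set.disjoint_sdiff_right ENNReal.summable ENNReal.summable,
    Set.union_sdiff_cancel (Set.singleton_subset_iff.mpr he)]

lemma graphLen_eq_top_of_infinite {G : SimpleGraph M} {S : Set (Sym2 M)} (hS : S ⊆ G.edgeSet)
    (hinf : S.Infinite) {δ : ℝ≥0∞} (hδ : δ ≠ 0) (hlen : ∀ e ∈ S, δ ≤ edgeLen e) :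
    graphLen G = ⊤ := by
  have := hinf.to_subtype
  refine top_le_iff.mp ?_
  calc ⊤ = ∑' _ : S, δ := (ENNReal.tsum_const_eq_top_of_ne_zero hδ).symm
    _ ≤ ∑' e : S, edgeLen (e : Sym2 M) := ENNReal.tsum_le_tsum fun e => hlen e e.2
    _ ≤ graphLen G := ENNReal.tsum_mono_subtype edgeLen hS

end

lemma _root_.SimpleGraph.Reachable.deleteEdges_reachable_or {V : Type*} {G : SimpleGraph V}
    {a u v : V} (h : G.Reachable a u) :
    (G.deleteEdges {s(u, v)}).Reachable a u ∨ (G.deleteEdges {s(u, v)}).Reachable a v := by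
  obtain ⟨p⟩ := h
  induction p with
  | nil => exact Or.inl .rfl
  | @cons a c u hac p ih =>
    by_cases hc : s(a, c) = s(u, v)
    · rcases Sym2.eq_iff.mp hc with ⟨rfl, rfl⟩ | ⟨rfl, rfl⟩
      · exact Or.inl .rfl
      · exact Or.inr .rfl
    · have hadj : (G.deleteEdges {s(u, v)}).Adj a c := by
        simp only [deleteEdges_adj, Set.mem_singleton_iff]
        exact ⟨hac, hc⟩
      exact ih.imp hadj.reachable.trans hadj.reachable.trans

lemma _root_.SimpleGraph.IsAcyclic.not_reachable_deleteEdges_of_mem_edges {V : Type*}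
    {G : SimpleGraph V} (hG : G.IsAcyclic) {x y : V} {p : G.Walk x y} (hp : p.IsPath)
    {e : Sym2 V} (he : e ∈ p.edges) : ¬(G.deleteEdges {e}).Reachable x y := by
  classical
  induction e with
  | _ u v =>
    rw [reachable_deleteEdges_iff_exists_walk]
    rintro ⟨q, hq⟩
    have : q.toPath = ⟨p, hp⟩ := (hG.subsingleton_path x y).elim _ _
    exact hq (q.edges_toPath_subset_edges (this ▸ he))

lemma _root_.SimpleGraph.IsTree.deleteEdges_sup_edge {V : Type*} {T : SimpleGraph V}
    (hT : T.IsTree) {u v x y : V} (hxy : ¬(T.deleteEdges {s(u, v)}).Reachable x y) :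
    (T.deleteEdges {s(u, v)} ⊔ edge x y).IsTree := by
  set G := T.deleteEdges {s(u, v)}
  have hside : ∀ z, G.Reachable z u ∨ G.Reachable z v :=
    fun z => (hT.connected.preconnected z u).deleteEdges_reachable_or
  have hGle : G ≤ G ⊔ edge x y := le_sup_left
  have hne : x ≠ y := by
    rintro rfl
    exact hxy .rfl
  have hxy' : (G ⊔ edge x y).Reachable x y :=
    ((edge_adj ..).mpr ⟨Or.inl ⟨rfl, rfl⟩, hne⟩ : (edge x y).Adj x y).reachable.mono
      le_sup_right
  have huv : (G ⊔ edge x y).Reachable u v := by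
    rcases hside x with hx | hx <;> rcases hside y with hy | hy
    · exact absurd (hx.trans hy.symm) hxy
    · exact ((hx.symm.mono hGle).trans hxy').trans (hy.mono hGle)
    · exact ((hy.symm.mono hGle).trans hxy'.symm).trans (hx.mono hGle)
    · exact absurd (hx.trans hy.symm) hxy
  refine ⟨(connected_iff_exists_forall_reachable _).mpr ⟨u, fun z => ?_⟩,
    (hT.isAcyclic.anti (deleteEdges_le _)).sup_edge_of_not_reachable hxy⟩
  rcases hside z with hz | hz
  · exact (hz.mono hGle).symm
  · exact huv.trans (hz.mono hGle).symm

section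

variable [MetricSpace M]

lemma IsMST.edgeLen_le_of_mem_edges {T : SimpleGraph M} (hT : IsMST T) {x y : M}
    {p : T.Walk x y} (hp : p.IsPath) {e : Sym2 M} (he : e ∈ p.edges) :
    edgeLen e ≤ edist x y := by
  obtain ⟨hTree, hfin, hmin⟩ := hT
  by_contra! hlt
  have heT : e ∈ T.edgeSet := p.edges_subset_edgeSet he
  induction e with
  | _ u v =>
    have hxy := hTree.isAcyclic.not_reachable_deleteEdges_of_mem_edges hp he
    have hrest : graphLen (T.deleteEdges {s(u, v)}) ≠ ⊤ := by
      rw [← edgeLen_add_graphLen_deleteEdges heT] at hfin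
      exact (ENNReal.add_lt_top.mp hfin).2.ne
    refine (hmin _ (hTree.deleteEdges_sup_edge hxy)).not_gt ?_
    calc graphLen (T.deleteEdges {s(u, v)} ⊔ edge x y)
        ≤ graphLen (T.deleteEdges {s(u, v)}) + edist x y := by
          simpa [graphLen_edge] using graphLen_sup_le (T.deleteEdges {s(u, v)}) (edge x y)
      _ < graphLen (T.deleteEdges {s(u, v)}) + edgeLen s(u, v) :=
          ENNReal.add_lt_add_left hrest hlt
      _ = graphLen T := by rw [add_comm, edgeLen_add_graphLen_deleteEdges heT]

lemma IsMST.exists_crossing_edge_le {T : SimpleGraph M} (hT : IsMST T) {S : Set M} {x y : M}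
    (hx : x ∈ S) (hy : y ∉ S) :
    ∃ e ∈ crossingEdges T S Sᶜ, edgeLen e ≤ edist x y := by
  classical
  obtain ⟨p⟩ := hT.1.connected.preconnected x y
  obtain ⟨d, hd, hdS, hdS'⟩ := p.toPath.1.exists_boundary_dart S hx hy
  have hde : d.edge ∈ p.toPath.1.edges := p.toPath.1.edges_eq_map_darts ▸ List.mem_map_of_mem hd
  exact ⟨d.edge, ⟨d.edge_mem, d.fst, hdS, d.snd, hdS', rfl⟩,
    hT.edgeLen_le_of_mem_edges p.toPath.2 hde⟩

end

theorem mst_infinitely_many_crossing_edges_iff_general [MetricSpace M] (T : SimpleGraph M)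
    (hT : IsMST T) (M₁ M₂ : Set M) (hdisj : Disjoint M₁ M₂) (hunion : M₁ ∪ M₂ = Set.univ) :
    {e : Sym2 M | e ∈ T.edgeSet ∧ ∃ x ∈ M₁, ∃ y ∈ M₂, e = s(x,y)}.Infinite ↔
      setDist M₁ M₂ = 0 := by
  obtain rfl : M₂ = M₁ᶜ := (IsCompl.compl_eq ⟨hdisj, codisjoint_iff.mpr hunion⟩).symm
  change (crossingEdges T M₁ M₁ᶜ).Infinite ↔ _
  constructor
  · intro hinf
    by_contra h0
    refine hT.2.1.ne (graphLen_eq_top_of_infinite (fun e he => he.1) hinf h0 ?_)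
    rintro e ⟨-, x, hx, y, hy, rfl⟩
    exact setDist_le_edist hx hy
  · intro h0
    by_contra hinf
    have hfin := Set.not_infinite.mp hinf
    have hpos : 0 < hfin.toFinset.inf edgeLen :=
      (Finset.lt_inf_iff ENNReal.zero_lt_top).mpr fun e he =>
        edgeLen_pos_of_mem_edgeSet (hfin.mem_toFinset.mp he).1
    refine hpos.not_ge (h0 ▸ le_iInf₂ fun x hx => le_iInf₂ fun y hy => ?_)
    obtain ⟨e, he, hle⟩ := hT.exists_crossing_edge_le hx hy
    exact (Finset.inf_le (hfin.mem_toFinset.mpr he)).trans hle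

/-- For a partition `M = M₁ ⊔ M₂`, a minimal spanning tree has infinitely many edges
connecting `M₁` and `M₂` iff `ρ(M₁, M₂) = 0`. -/
theorem mst_infinitely_many_crossing_edges_iff [MetricSpace M] (T : SimpleGraph M)
    (hT : IsMST T) (M₁ M₂ : Set M) (hdisj : Disjoint M₁ M₂) (hunion : M₁ ∪ M₂ = Set.univ)
    (h₁ : M₁.Nonempty) (h₂ : M₂.Nonempty) :
    {e : Sym2 M | e ∈ T.edgeSet ∧ ∃ x ∈ M₁, ∃ y ∈ M₂, e = s(x,y)}.Infinite ↔
      setDist M₁ M₂ = 0 :=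
  mst_infinitely_many_crossing_edges_iff_general T hT M₁ M₂ hdisj hunion

end MSTPaper
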